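/- arXiv:2209.00238 — 2 statements merged into one kernel-verified Lean document; each statement's English description precedes it below -/
import Mathlib

section
/- Let C be a salient closed convex cone in a finite-dimensional real normed space E, and let (sᵢⁿ)ₙ be sequences in C \ {0} for i = 1,…,m. If the sequence of sums (s₁ⁿ + ⋯ + sₘⁿ)ₙ converges, then each sequence (sᵢⁿ)ₙ has a convergent subsequence. -/
/-!
By compactness of the unit sphere, salience of a closed cone `C` gives a uniform `c > 0` with
`c‖x‖ ≤ ‖x + y‖` for all `x, y ∈ C`: the distance from `-u` to `C` is positive on the unit vectors
`u ∈ C`, hence bounded below. Since a convex cone is closed under addition, each summand `sᵢⁿ` is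
then bounded by `‖s₁ⁿ + ⋯ + sₘⁿ‖ / c`, and a convergent sequence is bounded, so Bolzano–Weierstrass
applies.
-/

open Filter Pointwise Metric

theorem exists_pos_mul_norm_le_norm_add_of_salient
    {E : Type*} [NormedAddCommGroup E] [NormedSpace ℝ E] [ProperSpace E]
    {C : Set E} (hCclosed : IsClosed C) (hCcone : ∀ t : ℝ, 0 < t → t • C ⊆ C)
    (hCsalient : ∀ x ∈ C, -x ∈ C → x = 0) :
    ∃ c > 0, ∀ x ∈ C, ∀ y ∈ C, c * ‖x‖ ≤ ‖x + y‖ := by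
  have hK : IsCompact (C ∩ sphere 0 1) := (isCompact_sphere 0 1).inter_left hCclosed
  have hpos : ∀ u ∈ C ∩ sphere (0 : E) 1, 0 < infDist (-u) C := by
    rintro u ⟨huC, hu⟩
    refine (hCclosed.notMem_iff_infDist_pos ⟨u, huC⟩).1 fun hnu => ?_
    simp [hCsalient u huC hnu] at hu
  obtain ⟨c, hc, hcle⟩ :=
    hK.exists_forall_le' ((continuous_infDist_pt C).comp continuous_neg).continuousOn hpos
  refine ⟨c, hc, fun x hx y hy => ?_⟩
  rcases eq_or_ne x 0 with rfl | hx0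
  · simp
  have hr : 0 < ‖x‖⁻¹ := inv_pos.2 (norm_pos_iff.2 hx0)
  have hu : ‖x‖⁻¹ • x ∈ C ∩ sphere 0 1 :=
    ⟨hCcone _ hr (Set.smul_mem_smul_set hx), by simp [norm_smul, hx0]⟩
  calc c * ‖x‖ ≤ infDist (-(‖x‖⁻¹ • x)) C * ‖x‖ := by gcongr; exact hcle _ hu
    _ ≤ dist (-(‖x‖⁻¹ • x)) (‖x‖⁻¹ • y) * ‖x‖ := by
      gcongr; exact infDist_le_dist_of_mem (hCcone _ hr (Set.smul_mem_smul_set hy))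
    _ = ‖x + y‖ := by
      rw [dist_eq_norm, ← neg_add', norm_neg, ← smul_add, norm_smul, norm_inv, norm_norm]
      field_simp

theorem add_mem_of_convex_of_smul_subset {E : Type*} [AddCommGroup E] [Module ℝ E] {C : Set E}
    (hCconv : Convex ℝ C) (hCcone : ∀ t : ℝ, 0 < t → t • C ⊆ C) {x y : E} (hx : x ∈ C)
    (hy : y ∈ C) : x + y ∈ C := by
  have hmid : (2⁻¹ : ℝ) • x + (2⁻¹ : ℝ) • y ∈ C :=
    hCconv hx hy (by norm_num) (by norm_num) (by norm_num)
  simpa [smul_add, smul_smul] using hCcone 2 two_pos (Set.smul_mem_smul_set hmid)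

theorem mul_norm_le_norm_sum {E ι : Type*} [SeminormedAddCommGroup E] [Fintype ι]
    {S : AddSubmonoid E} {c : ℝ} (hc : ∀ x ∈ S, ∀ y ∈ S, c * ‖x‖ ≤ ‖x + y‖) {x : ι → E}
    (hx : ∀ i, x i ∈ S) (i : ι) : c * ‖x i‖ ≤ ‖∑ j, x j‖ := by
  classical
  rw [← Finset.add_sum_erase _ _ (Finset.mem_univ i)]
  exact hc _ (hx i) _ (S.sum_mem fun j _ => hx j)

theorem zero_mem_of_isClosed_of_smul_subset {E : Type*} [AddCommGroup E] [Module ℝ E]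
    [TopologicalSpace E] [ContinuousSMul ℝ E]
    {C : Set E} (hCclosed : IsClosed C) (hCcone : ∀ t : ℝ, 0 < t → t • C ⊆ C) {x : E}
    (hx : x ∈ C) : (0 : E) ∈ C := by
  have htend : Tendsto (fun t : ℝ => t • x) (nhdsWithin 0 (Set.Ioi 0)) (nhds 0) :=
    tendsto_nhdsWithin_of_tendsto_nhds
      ((continuous_id.smul continuous_const).tendsto' 0 0 (zero_smul ℝ x))
  exact hCclosed.mem_of_tendsto htend
    (eventually_nhdsWithin_of_forall fun t ht => hCcone t ht (Set.smul_mem_smul_set hx))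

/-- Let `C` be a salient closed convex cone in a finite-dimensional real normed space,
and `(sᵢⁿ)ₙ` sequences in `C \ {0}`, `i = 1, …, m`. If the sequence of sums
`(s₁ⁿ + ⋯ + sₘⁿ)ₙ` converges, then each sequence `(sᵢⁿ)ₙ` has a convergent subsequence. -/
theorem exists_convergent_subseq_of_sum_converges_in_salient_cone
    {E : Type*} [NormedAddCommGroup E] [NormedSpace ℝ E] [FiniteDimensional ℝ E]
    (C : Set E) (hCclosed : IsClosed C) (hCconv : Convex ℝ C)
    (hCcone : ∀ t : ℝ, 0 < t → t • C ⊆ C)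
    (hCsalient : ∀ x ∈ C, -x ∈ C → x = 0)
    (m : ℕ) (s : Fin m → ℕ → E)
    (hs : ∀ i n, s i n ∈ C \ {0})
    (hconv : ∃ L : E, Tendsto (fun n => ∑ i, s i n) atTop (nhds L)) :
    ∀ i, ∃ φ : ℕ → ℕ, StrictMono φ ∧ ∃ L : E, Tendsto (s i ∘ φ) atTop (nhds L) := by
  intro i
  let S : AddSubmonoid E :=
    { carrier := C
      add_mem' := add_mem_of_convex_of_smul_subset hCconv hCcone
      zero_mem' := zero_mem_of_isClosed_of_smul_subset hCclosed hCcone (hs i 0).1 }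
  obtain ⟨c, hc, hcS⟩ := exists_pos_mul_norm_le_norm_add_of_salient hCclosed hCcone hCsalient
  obtain ⟨L, hL⟩ := hconv
  obtain ⟨M, hM⟩ := isBounded_iff_forall_norm_le.1 (isBounded_range_of_tendsto _ hL)
  have hbdd : Bornology.IsBounded (Set.range (s i)) := by
    refine isBounded_iff_forall_norm_le.2 ⟨M / c, ?_⟩
    rintro _ ⟨n, rfl⟩
    rw [le_div_iff₀ hc, mul_comm]
    exact (mul_norm_le_norm_sum (S := S) hcS (fun j => (hs j n).1) i).trans
      (hM _ (Set.mem_range_self n))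
  obtain ⟨L, -, φ, hφ, hφL⟩ := tendsto_subseq_of_bounded hbdd (Set.mem_range_self (f := s i))
  exact ⟨φ, hφ, L, hφL⟩
end

section
/- Let C be a salient closed convex cone in ℝⁿ, M a closed convex subset of ℝᵐ₊ \ {0}, and A₁, …, Aₘ closed convex subsets of C \ {0} each with recession cone C. Then the M-sum ⊕_M(A₁,…,Aₘ) = ⋃_{μ∈M} Σᵢ μᵢ ⋆ Aᵢ is closed. -/
open Pointwise

/-- The recession cone `rec(S) = {d | S + d ⊆ S}`. -/
def recCone {E : Type*} [AddCommMonoid E] (S : Set E) : Set E :=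
  {d | ∀ x ∈ S, x + d ∈ S}

/-- Epimultiplication: `α ⋆ S = αS` if `α ≠ 0`, and `0 ⋆ S = rec(S)`. -/
noncomputable def epiSmul {E : Type*} [AddCommMonoid E] [SMul ℝ E] (a : ℝ) (S : Set E) :
    Set E :=
  if a = 0 then recCone S else a • S

/-!
Write the `M`-sum as the image of `G = {(μ, y) | μ ∈ M, yᵢ ∈ μᵢ ⋆ Aᵢ}` under
`(μ, y) ↦ Σᵢ yᵢ`. The set `G` is closed: when `μᵢ → 0` the points `yᵢ ∈ μᵢ Aᵢ ⊆ C` accumulate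
in `C = 0 ⋆ Aᵢ`. Bounded sums come from bounded `(μ, y)`: salience makes `dist(-u, C)` positive
on the compact set `C ∩ {‖u‖ = 1}`, whence `ε ‖y‖ ≤ ‖y + z‖` on `C` for some `ε > 0`; as the
other summands add up to a point of the cone `C = rec Aᵢ`, this bounds every `yᵢ`, and since
`Aᵢ` stays at distance `δᵢ > 0` from `0`, `μᵢ δᵢ ≤ ‖yᵢ‖` bounds `μ`. By Bolzano–Weierstrass
the image of `G` is then closed.
-/

open Filter Topology Metric Bornology

section RecCone

variable {E : Type*} [AddCommMonoid E]

lemma zero_mem_recCone (S : Set E) : (0 : E) ∈ recCone S := fun x hx => by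
  simpa using hx

lemma add_mem_recCone {S : Set E} {d e : E} (hd : d ∈ recCone S) (he : e ∈ recCone S) :
    d + e ∈ recCone S := fun x hx => by
  rw [← add_assoc]
  exact he _ (hd x hx)

lemma sum_mem_recCone {ι : Type*} {S : Set E} {s : Finset ι} {f : ι → E}
    (h : ∀ i ∈ s, f i ∈ recCone S) : ∑ i ∈ s, f i ∈ recCone S :=
  Finset.sum_induction _ _ (fun _ _ => add_mem_recCone) (zero_mem_recCone S) h

lemma epiSmul_zero [SMul ℝ E] (S : Set E) : epiSmul 0 S = recCone S := if_pos rfl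

lemma epiSmul_of_ne_zero [SMul ℝ E] {t : ℝ} (ht : t ≠ 0) (S : Set E) : epiSmul t S = t • S :=
  if_neg ht

end RecCone

section Seminormed

variable {E : Type*} [SeminormedAddCommGroup E]

lemma exists_pos_le_norm_of_isClosed {A : Set E} (hA : IsClosed A) (h0 : (0 : E) ∉ A) :
    ∃ δ > 0, ∀ a ∈ A, δ ≤ ‖a‖ := by
  obtain ⟨δ, hδ, hball⟩ := Metric.isOpen_iff.1 hA.isOpen_compl 0 h0
  exact ⟨δ, hδ, fun a ha => not_lt.1 fun h => hball (mem_ball_zero_iff.2 h) ha⟩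

lemma mul_norm_le_norm_sum_s15 {ι : Type*} [Fintype ι] {S : Set E} {ε : ℝ}
    (hε : ∀ y ∈ recCone S, ∀ z ∈ recCone S, ε * ‖y‖ ≤ ‖y + z‖) {y : ι → E}
    (hy : ∀ j, y j ∈ recCone S) (i : ι) : ε * ‖y i‖ ≤ ‖∑ j, y j‖ := by
  classical
  rw [← Finset.add_sum_erase _ _ (Finset.mem_univ i)]
  exact hε _ (hy i) _ (sum_mem_recCone fun j _ => hy j)

end Seminormed

section Normed

variable {E : Type*} [NormedAddCommGroup E] [NormedSpace ℝ E]

lemma exists_pos_mul_norm_le_norm_add [ProperSpace E] {C : Set E} (hC : IsClosed C)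
    (hcone : ∀ t : ℝ, 0 < t → t • C ⊆ C) (hsalient : ∀ x ∈ C, -x ∈ C → x = 0) :
    ∃ ε > 0, ∀ y ∈ C, ∀ z ∈ C, ε * ‖y‖ ≤ ‖y + z‖ := by
  have hpos : ∀ u ∈ C ∩ sphere 0 1, 0 < infDist (-u) C := fun u hu =>
    (hC.notMem_iff_infDist_pos ⟨u, hu.1⟩).1 fun h =>
      ne_zero_of_mem_unit_sphere ⟨u, hu.2⟩ (hsalient u hu.1 h)
  obtain ⟨ε, hε, hεu⟩ := ((isCompact_sphere 0 1).inter_left hC).exists_forall_le'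
    ((continuous_infDist_pt C).comp continuous_neg).continuousOn hpos
  refine ⟨ε, hε, fun y hy z hz => ?_⟩
  rcases eq_or_ne y 0 with rfl | hy0
  · simp
  have hyn : 0 < ‖y‖ := norm_pos_iff.2 hy0
  have hu : ‖y‖⁻¹ • y ∈ C ∩ sphere 0 1 :=
    ⟨hcone _ (inv_pos.2 hyn) (Set.smul_mem_smul_set hy), by simp [norm_smul, hyn.ne']⟩
  have hv : ‖y‖⁻¹ • z ∈ C := hcone _ (inv_pos.2 hyn) (Set.smul_mem_smul_set hz)
  calc ε * ‖y‖ ≤ infDist (-(‖y‖⁻¹ • y)) C * ‖y‖ := by gcongr; exact hεu _ hu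
    _ ≤ dist (-(‖y‖⁻¹ • y)) (‖y‖⁻¹ • z) * ‖y‖ := by gcongr; exact infDist_le_dist_of_mem hv
    _ = ‖y + z‖ := by
      rw [dist_eq_norm, ← norm_neg, neg_sub, sub_neg_eq_add, add_comm, ← smul_add, norm_smul,
        norm_inv, norm_norm, mul_comm, mul_inv_cancel_left₀ hyn.ne']

lemma mul_le_norm_of_mem_epiSmul {A : Set E} {δ t : ℝ} (hδ : ∀ a ∈ A, δ ≤ ‖a‖) (ht : 0 ≤ t)
    {y : E} (hy : y ∈ epiSmul t A) : t * δ ≤ ‖y‖ := by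
  rcases ht.eq_or_lt with rfl | htpos
  · simp
  rw [epiSmul_of_ne_zero htpos.ne'] at hy
  obtain ⟨a, ha, rfl⟩ := hy
  rw [norm_smul, Real.norm_of_nonneg ht]
  exact mul_le_mul_of_nonneg_left (hδ a ha) ht

lemma epiSmul_subset {A C : Set E} (hAC : ∀ t : ℝ, 0 < t → t • A ⊆ C) (hrec : recCone A = C)
    {t : ℝ} (ht : 0 ≤ t) : epiSmul t A ⊆ C := by
  rcases ht.eq_or_lt with rfl | htpos
  · rw [epiSmul_zero, hrec]
  · rw [epiSmul_of_ne_zero htpos.ne']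
    exact hAC t htpos

lemma isClosed_setOf_mem_epiSmul {A C : Set E} (hA : IsClosed A) (hC : IsClosed C)
    (hAC : ∀ t : ℝ, 0 < t → t • A ⊆ C) (hrec : recCone A = C) :
    IsClosed {p : ℝ × E | 0 ≤ p.1 ∧ p.2 ∈ epiSmul p.1 A} := by
  refine IsSeqClosed.isClosed fun p q hp hpq => ?_
  have hfst : Tendsto (fun k => (p k).1) atTop (𝓝 q.1) := (continuous_fst.tendsto q).comp hpq
  have hsnd : Tendsto (fun k => (p k).2) atTop (𝓝 q.2) := (continuous_snd.tendsto q).comp hpq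
  have hq : 0 ≤ q.1 := isClosed_Ici.mem_of_tendsto hfst (.of_forall fun k => (hp k).1)
  refine ⟨hq, ?_⟩
  rcases hq.eq_or_lt with hq0 | hqpos
  · rw [← hq0, epiSmul_zero, hrec]
    exact hC.mem_of_tendsto hsnd (.of_forall fun k => epiSmul_subset hAC hrec (hp k).1 (hp k).2)
  · have hev : ∀ᶠ k in atTop, 0 < (p k).1 := hfst.eventually (eventually_gt_nhds hqpos)
    rw [epiSmul_of_ne_zero hqpos.ne', Set.mem_smul_set_iff_inv_smul_mem₀ hqpos.ne']
    refine hA.mem_of_tendsto ((hfst.inv₀ hqpos.ne').smul hsnd) (hev.mono fun k hk => ?_)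
    have hpk := (hp k).2
    rwa [epiSmul_of_ne_zero hk.ne', Set.mem_smul_set_iff_inv_smul_mem₀ hk.ne'] at hpk

end Normed

lemma isClosed_image_of_isBounded_inter_preimage {X Y : Type*} [PseudoMetricSpace X]
    [ProperSpace X] [MetricSpace Y] {f : X → Y} (hf : Continuous f) {G : Set X}
    (hG : IsClosed G) (hbdd : ∀ s, IsBounded s → IsBounded (G ∩ f ⁻¹' s)) :
    IsClosed (f '' G) := by
  refine IsSeqClosed.isClosed fun y y₀ hy hy₀ => ?_
  choose x hxG hxy using hy
  obtain ⟨x₀, hx₀, φ, hφ, hxφ⟩ := tendsto_subseq_of_bounded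
    (hbdd _ (isBounded_range_of_tendsto y hy₀)) fun k => ⟨hxG k, by simp [hxy]⟩
  refine ⟨x₀, hG.closure_subset (closure_mono Set.inter_subset_left hx₀),
    tendsto_nhds_unique ((hf.tendsto x₀).comp hxφ) ?_⟩
  simpa [Function.comp_def, hxy] using hy₀.comp hφ.tendsto_atTop

section MSum

variable {ι E : Type*} [NormedAddCommGroup E] [NormedSpace ℝ E]

def msumDecomp (M : Set (ι → ℝ)) (A : ι → Set E) : Set ((ι → ℝ) × (ι → E)) :=
  {p | p.1 ∈ M ∧ ∀ i, 0 ≤ p.1 i ∧ p.2 i ∈ epiSmul (p.1 i) (A i)}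

variable {M : Set (ι → ℝ)} {A : ι → Set E} {C : Set E}

lemma biUnion_sum_epiSmul_eq_image_msumDecomp [Fintype ι] (hM : ∀ μ ∈ M, ∀ i, 0 ≤ μ i) :
    ⋃ μ ∈ M, ∑ i, epiSmul (μ i) (A i) = (fun p => ∑ i, p.2 i) '' msumDecomp M A := by
  ext x
  simp only [msumDecomp, Set.mem_iUnion₂, Set.mem_fintype_sum, Set.mem_image,
    Set.mem_ofPred_eq, Prod.exists]
  constructor
  · rintro ⟨μ, hμ, y, hy, rfl⟩
    exact ⟨μ, y, ⟨hμ, fun i => ⟨hM μ hμ i, hy i⟩⟩, rfl⟩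
  · rintro ⟨μ, y, ⟨hμ, hy⟩, rfl⟩
    exact ⟨μ, hμ, y, fun i => (hy i).2, rfl⟩

lemma isClosed_msumDecomp (hM : IsClosed M) (hA : ∀ i, IsClosed (A i)) (hC : IsClosed C)
    (hAC : ∀ i, ∀ t : ℝ, 0 < t → t • A i ⊆ C) (hrec : ∀ i, recCone (A i) = C) :
    IsClosed (msumDecomp M A) := by
  simp only [msumDecomp, Set.ofPred_and, Set.ofPred_forall]
  exact (hM.preimage continuous_fst).inter <| isClosed_iInter fun i =>
    (isClosed_setOf_mem_epiSmul (hA i) hC (hAC i) (hrec i)).preimage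
      (by fun_prop : Continuous fun p : (ι → ℝ) × (ι → E) => (p.1 i, p.2 i))

lemma isBounded_msumDecomp_inter_preimage [Fintype ι] {ε : ℝ} (hε : 0 < ε)
    (hεC : ∀ y ∈ C, ∀ z ∈ C, ε * ‖y‖ ≤ ‖y + z‖) (hA : ∀ i, IsClosed (A i))
    (hA0 : ∀ i, (0 : E) ∉ A i) (hAC : ∀ i, ∀ t : ℝ, 0 < t → t • A i ⊆ C)
    (hrec : ∀ i, recCone (A i) = C) {s : Set E} (hs : IsBounded s) :
    IsBounded (msumDecomp M A ∩ (fun p => ∑ i, p.2 i) ⁻¹' s) := by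
  choose δ hδ hδA using fun i => exists_pos_le_norm_of_isClosed (hA i) (hA0 i)
  obtain ⟨r, hr⟩ := hs.subset_closedBall 0
  refine ((IsBounded.pi fun i => isBounded_Icc 0 (r / ε / δ i)).prod
    (IsBounded.pi fun _ => isBounded_closedBall (x := 0) (r := r / ε))).subset ?_
  rintro ⟨μ, y⟩ ⟨⟨-, hμy⟩, hsum⟩
  have hy : ∀ i, ‖y i‖ ≤ r / ε := fun i => by
    rw [le_div_iff₀ hε, mul_comm]
    refine (mul_norm_le_norm_sum_s15 (S := A i) (by rwa [hrec i]) (fun j => ?_) i).trans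
      (mem_closedBall_zero_iff.1 (hr hsum))
    exact hrec i ▸ epiSmul_subset (hAC j) (hrec j) (hμy j).1 (hμy j).2
  refine ⟨fun i _ => ⟨(hμy i).1, ?_⟩, fun i _ => mem_closedBall_zero_iff.2 (hy i)⟩
  rw [le_div_iff₀ (hδ i)]
  exact (mul_le_norm_of_mem_epiSmul (hδA i) (hμy i).1 (hμy i).2).trans (hy i)

end MSum

theorem msum_isClosed_general
    (n : ℕ) (C : Set (EuclideanSpace ℝ (Fin n)))
    (hCclosed : IsClosed C)
    (hCcone : ∀ t : ℝ, 0 < t → t • C ⊆ C)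
    (hCsalient : ∀ x ∈ C, -x ∈ C → x = 0)
    (m : ℕ) (M : Set (Fin m → ℝ))
    (hMclosed : IsClosed M)
    (hMsub : M ⊆ {μ : Fin m → ℝ | ∀ i, 0 ≤ μ i} \ {0})
    (A : Fin m → Set (EuclideanSpace ℝ (Fin n)))
    (hAclosed : ∀ i, IsClosed (A i))
    (hAsub : ∀ i, A i ⊆ C \ {0})
    (hArec : ∀ i, recCone (A i) = C) :
    IsClosed (⋃ μ ∈ M, ∑ i, epiSmul (μ i) (A i)) := by
  obtain ⟨ε, hε, hεC⟩ := exists_pos_mul_norm_le_norm_add hCclosed hCcone hCsalient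
  have hAC : ∀ i, ∀ t : ℝ, 0 < t → t • A i ⊆ C := fun i t ht =>
    (Set.smul_set_mono fun a ha => (hAsub i ha).1).trans (hCcone t ht)
  have hA0 : ∀ i, (0 : EuclideanSpace ℝ (Fin n)) ∉ A i := fun i h => (hAsub i h).2 rfl
  rw [biUnion_sum_epiSmul_eq_image_msumDecomp fun μ hμ => (hMsub hμ).1]
  exact isClosed_image_of_isBounded_inter_preimage (by fun_prop)
    (isClosed_msumDecomp hMclosed hAclosed hCclosed hAC hArec)
    fun s hs => isBounded_msumDecomp_inter_preimage hε hεC hAclosed hA0 hAC hArec hs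

/-- Let `C` be a salient closed convex cone in `ℝⁿ`, `M` a closed convex subset of
`ℝᵐ₊ \ {0}`, and `A₁, …, Aₘ` closed convex subsets of `C \ {0}` each with recession
cone `C`. Then the `M`-sum `⋃_{μ∈M} Σᵢ μᵢ ⋆ Aᵢ` is closed. -/
theorem msum_isClosed
    (n : ℕ) (C : Set (EuclideanSpace ℝ (Fin n)))
    (hCclosed : IsClosed C) (hCconv : Convex ℝ C)
    (hCcone : ∀ t : ℝ, 0 < t → t • C ⊆ C)
    (hCsalient : ∀ x ∈ C, -x ∈ C → x = 0)
    (m : ℕ) (M : Set (Fin m → ℝ))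
    (hMclosed : IsClosed M) (hMconv : Convex ℝ M)
    (hMsub : M ⊆ {μ : Fin m → ℝ | ∀ i, 0 ≤ μ i} \ {0})
    (A : Fin m → Set (EuclideanSpace ℝ (Fin n)))
    (hAclosed : ∀ i, IsClosed (A i)) (hAconv : ∀ i, Convex ℝ (A i))
    (hAsub : ∀ i, A i ⊆ C \ {0})
    (hArec : ∀ i, recCone (A i) = C) :
    IsClosed (⋃ μ ∈ M, ∑ i, epiSmul (μ i) (A i)) :=
  msum_isClosed_general n C hCclosed hCcone hCsalient m M hMclosed hMsub A hAclosed hAsub hArec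
end
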